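/- arXiv:1006.1003 — 5 statements merged into one kernel-verified Lean document; each statement's English description precedes it below -/
import Mathlib

section
/- The stack Laplacian is skew-additive with respect to stack shifts: for any functions u, v : V → ℕ and any collection of rotor stacks ρ, Δ_ρ(u+v) = Δ_ρ u + Δ_{E^u ρ} v, where (E^u ρ)_k(x) = ρ_{u(x)+k}(x). -/
open scoped BigOperators

open Classical in
/-- Number of occurrences of the edge `e` among the rotors `ρ_1(s e), …, ρ_n(s e)`. -/
noncomputable def Rcount {V E : Type*} (src : E → V) (ρ : V → ℕ → E) (e : E) (n : ℕ) : ℕ :=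
  ((Finset.Icc 1 n).filter fun k => ρ (src e) k = e).card

open Classical in
/-- The stack Laplacian `Δ_ρ u (x) = Σ_{t(e)=x} R_ρ(e, u(s e)) − u x`. -/
noncomputable def stackLap {V E : Type*} (src tgt : E → V) (ρ : V → ℕ → E)
    (u : V → ℕ) (x : V) : ℤ :=
  (∑ᶠ e : E, if tgt e = x then (Rcount src ρ e (u (src e)) : ℤ) else 0) - u x

/-- The shifted stacks `(E^u ρ)_k(x) = ρ_{u(x)+k}(x)`. -/
def shiftStack {V E : Type*} (ρ : V → ℕ → E) (u : V → ℕ) : V → ℕ → E :=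
  fun x k => ρ x (u x + k)

/-- Skew-additivity of the stack Laplacian: `Δ_ρ(u+v) = Δ_ρ u + Δ_{E^u ρ} v`. -/
theorem stackLap_add {V E : Type*} (src tgt : E → V) (ρ : V → ℕ → E)
    (hsrc : ∀ x k, src (ρ x k) = x)
    (hloc : ∀ x : V, {e : E | tgt e = x}.Finite)
    (u v : V → ℕ) :
    ∀ x : V, stackLap src tgt ρ (fun y => u y + v y) x =
      stackLap src tgt ρ u x + stackLap src tgt (shiftStack ρ u) v x := by
  classical
  intro x
  have key : ∀ e : E, Rcount src ρ e (u (src e) + v (src e)) =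
      Rcount src ρ e (u (src e)) + Rcount src (shiftStack ρ u) e (v (src e)) := by
    intro e
    set a := u (src e)
    set b := v (src e)
    unfold Rcount
    have hsplit : Finset.Icc 1 (a + b) = Finset.Icc 1 a ∪ Finset.Icc (a + 1) (a + b) := by
      ext k
      simp only [Finset.mem_Icc, Finset.mem_union]
      omega
    have hdisj : Disjoint (Finset.Icc 1 a) (Finset.Icc (a + 1) (a + b)) := by
      rw [Finset.disjoint_left]
      intro k hk hk'
      simp only [Finset.mem_Icc] at hk hk'
      omega
    rw [hsplit, Finset.filter_union, Finset.card_union_of_disjoint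
      (Finset.disjoint_filter_filter hdisj)]
    congr 1
    -- second part: bijection k ↦ a + k
    have : (Finset.Icc (a + 1) (a + b)).filter (fun k => ρ (src e) k = e) =
        ((Finset.Icc 1 b).filter (fun k => ρ (src e) (a + k) = e)).image (fun k => a + k) := by
      ext k
      simp only [Finset.mem_filter, Finset.mem_image, Finset.mem_Icc]
      constructor
      · rintro ⟨⟨h1, h2⟩, h3⟩
        exact ⟨k - a, ⟨by omega, by rw [show a + (k - a) = k by omega]; exact h3⟩, by omega⟩
      · rintro ⟨m, ⟨⟨hm1, hm2⟩, hm3⟩, rfl⟩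
        exact ⟨⟨by omega, by omega⟩, hm3⟩
    rw [this, Finset.card_image_of_injective _ (fun p q h => by omega)]
    rfl
  have hfin1 : (Function.support fun e : E =>
      (if tgt e = x then (Rcount src ρ e (u (src e)) : ℤ) else 0)).Finite := by
    apply (hloc x).subset
    intro e he
    by_contra h
    simp only [Set.mem_setOf_eq] at h
    simp [h] at he
  have hfin2 : (Function.support fun e : E =>
      (if tgt e = x then (Rcount src (shiftStack ρ u) e (v (src e)) : ℤ) else 0)).Finite := by
    apply (hloc x).subset
    intro e he
    by_contra h
    simp only [Set.mem_setOf_eq] at h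
    simp [h] at he
  unfold stackLap
  have : (∑ᶠ e : E, if tgt e = x then (Rcount src ρ e (u (src e) + v (src e)) : ℤ) else 0) =
      (∑ᶠ e : E, if tgt e = x then (Rcount src ρ e (u (src e)) : ℤ) else 0) +
      (∑ᶠ e : E, if tgt e = x then (Rcount src (shiftStack ρ u) e (v (src e)) : ℤ) else 0) := by
    rw [← finsum_add_distrib hfin1 hfin2]
    apply finsum_congr
    intro e
    by_cases h : tgt e = x <;> simp [h, key e]
  push_cast
  rw [this]
  ring
end

section
/- (Least Action Principle for abelian stacks) Suppose u_* : V → ℕ has finite support A_*, and the configuration σ_* = σ_0 + Δ_ρ u_* satisfies σ_*(x) ≤ 1 for all x. Then there exists a finite complete legal firing sequence for σ_0, and its odometer function u satisfies u ≤ u_*. -/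
open scoped BigOperators

/-- The number of times each vertex occurs in a firing sequence. -/
def fireCnt {V : Type*} [DecidableEq V] (seq : List V) : V → ℕ :=
  fun x => seq.count x

/-- `seq` is a legal firing sequence for `σ0`: each fired vertex has more than one chip
at the moment it is fired. -/
def IsLegalSeq {V E : Type*} [DecidableEq V] (src tgt : E → V) (ρ : V → ℕ → E)
    (σ0 : V → ℤ) (seq : List V) : Prop :=
  ∀ j : Fin seq.length,
    1 < σ0 (seq.get j) + stackLap src tgt ρ (fireCnt (seq.take j)) (seq.get j)

/-- `seq` is a complete firing sequence for `σ0`: afterwards no vertex has more than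
one chip. -/
def IsCompleteSeq {V E : Type*} [DecidableEq V] (src tgt : E → V) (ρ : V → ℕ → E)
    (σ0 : V → ℤ) (seq : List V) : Prop :=
  ∀ x : V, σ0 x + stackLap src tgt ρ (fireCnt seq) x ≤ 1

/-- A rotor configuration `r` is acyclic on `A`: every nonempty finite subset of `A`
contains a vertex whose rotor points outside the subset. -/
def AcyclicOn {V E : Type*} (tgt : E → V) (r : V → E) (A : Set V) : Prop :=
  ∀ A' ⊆ A, A'.Finite → A'.Nonempty → ∃ x ∈ A', tgt (r x) ∉ A'

/-!
The stack Laplacian `Δ_ρ u (x)` is monotone in the values of `u` away from `x`. Hence along a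
legal firing sequence no vertex can be fired for the `(u_* x + 1)`-st time: at that moment the
odometer `u` satisfies `u ≤ u_*` and `u x = u_* x`, so `σ_0 x + Δ_ρ u (x) ≤ σ_* (x) ≤ 1`.
Legal sequences therefore have length at most `Σ u_*`, and a legal sequence that cannot be
extended is complete.
-/

open Function

section StackLaplacian

variable {V E : Type*} (src tgt : E → V) (ρ : V → ℕ → E)

open Classical in
lemma Rcount_mono (e : E) : Monotone (Rcount src ρ e) := fun _ _ hmn =>
  Finset.card_le_card (Finset.filter_subset_filter _ (Finset.Icc_subset_Icc_right hmn))

lemma exists_rotor_eq_of_Rcount_ne_zero {e : E} {n : ℕ} (h : Rcount src ρ e n ≠ 0) :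
    ∃ k ∈ Set.Icc 1 n, ρ (src e) k = e := by
  classical
  obtain ⟨k, hk⟩ := Finset.card_ne_zero.mp h
  rw [Finset.mem_filter, Finset.mem_Icc] at hk
  exact ⟨k, hk.1, hk.2⟩

open Classical in
/-- Only edges among the first `u y` rotors of some `y` contribute to `Δ_ρ u`. -/
lemma hasFiniteSupport_stackLap_summand {u : V → ℕ} (hu : (support u).Finite) (x : V) :
    (fun e => if tgt e = x then (Rcount src ρ e (u (src e)) : ℤ) else 0).HasFiniteSupport := by
  refine (hu.biUnion fun y _ => (Set.finite_Icc 1 (u y)).image (ρ y)).subset fun e he => ?_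
  have hR : Rcount src ρ e (u (src e)) ≠ 0 := by
    intro h0
    simp [h0] at he
  obtain ⟨k, hk, hke⟩ := exists_rotor_eq_of_Rcount_ne_zero src ρ hR
  have hsrc : src e ∈ support u := by
    rw [mem_support]
    have := hk.1.trans hk.2
    omega
  exact Set.mem_biUnion hsrc ⟨k, hk, hke⟩

lemma stackLap_le_stackLap {u v : V → ℕ} (hv : (support v).Finite) (huv : u ≤ v) {x : V}
    (hx : u x = v x) : stackLap src tgt ρ u x ≤ stackLap src tgt ρ v x := by
  classical
  have hu : (support u).Finite :=
    hv.subset fun y hy => ((Nat.pos_of_ne_zero hy).trans_le (huv y)).ne'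
  unfold stackLap
  rw [hx]
  gcongr
  refine finsum_le_finsum' (hasFiniteSupport_stackLap_summand src tgt ρ hu x)
    (hasFiniteSupport_stackLap_summand src tgt ρ hv x) fun e => ?_
  split_ifs
  · exact Nat.cast_le.mpr (Rcount_mono src ρ e (huv (src e)))
  · rfl

end StackLaplacian

lemma List.length_le_sum_of_count_le {V : Type*} [DecidableEq V] (l : List V) {f : V → ℕ}
    (hf : (support f).Finite) (hcount : ∀ x, l.count x ≤ f x) :
    l.length ≤ ∑ x ∈ hf.toFinset, f x := by
  have hsub : l.toFinset ⊆ hf.toFinset := fun x hx => by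
    rw [Set.Finite.mem_toFinset, mem_support]
    have := List.count_pos_iff.mpr (List.mem_toFinset.mp hx)
    have := hcount x
    omega
  calc l.length = ∑ x ∈ l.toFinset, l.count x := (List.sum_toFinset_count_eq_length l).symm
    _ ≤ ∑ x ∈ l.toFinset, f x := Finset.sum_le_sum fun x _ => hcount x
    _ ≤ ∑ x ∈ hf.toFinset, f x := Finset.sum_le_sum_of_subset hsub

section FiringSequences

variable {V E : Type*} [DecidableEq V] (src tgt : E → V) (ρ : V → ℕ → E) (σ0 : V → ℤ)

lemma fireCnt_append_singleton (seq : List V) (x y : V) :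
    fireCnt (seq ++ [x]) y = fireCnt seq y + if x = y then 1 else 0 := by
  simp [fireCnt, List.count_append, List.count_singleton, beq_iff_eq]

lemma isLegalSeq_iff (seq : List V) :
    IsLegalSeq src tgt ρ σ0 seq ↔ ∀ j (hj : j < seq.length),
      1 < σ0 seq[j] + stackLap src tgt ρ (fireCnt (seq.take j)) seq[j] :=
  Fin.forall_iff

lemma isLegalSeq_nil : IsLegalSeq src tgt ρ σ0 [] := fun j => j.elim0

lemma isLegalSeq_append_singleton_iff (seq : List V) (x : V) :
    IsLegalSeq src tgt ρ σ0 (seq ++ [x]) ↔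
      IsLegalSeq src tgt ρ σ0 seq ∧ 1 < σ0 x + stackLap src tgt ρ (fireCnt seq) x := by
  rw [isLegalSeq_iff, isLegalSeq_iff]
  have hprefix : ∀ j (hj : j < seq.length),
      (seq ++ [x])[j]'(by simp; omega) = seq[j] ∧ (seq ++ [x]).take j = seq.take j :=
    fun j hj => ⟨List.getElem_append_left hj, List.take_append_of_le_length hj.le⟩
  constructor
  · intro h
    refine ⟨fun j hj => ?_, by simpa using h seq.length (by simp)⟩
    simpa only [hprefix j hj] using h j (by simp; omega)
  · rintro ⟨h, hx⟩ j hj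
    obtain hj | rfl := Nat.lt_succ_iff_lt_or_eq.mp (by simpa using hj)
    · simpa only [hprefix j hj] using h j hj
    · simpa using hx

variable {src tgt ρ σ0}

lemma IsLegalSeq.fireCnt_le {ustar : V → ℕ} (hustar : (support ustar).Finite)
    (hle : ∀ x, σ0 x + stackLap src tgt ρ ustar x ≤ 1) {seq : List V}
    (hseq : IsLegalSeq src tgt ρ σ0 seq) : fireCnt seq ≤ ustar := by
  induction seq using List.reverseRecOn with
  | nil => exact fun x => Nat.zero_le _
  | append_singleton seq x ih =>
    obtain ⟨hlegal, hfire⟩ := (isLegalSeq_append_singleton_iff src tgt ρ σ0 seq x).mp hseq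
    have hbound := ih hlegal
    have hlt : fireCnt seq x < ustar x := by
      by_contra! hge
      have := stackLap_le_stackLap src tgt ρ hustar hbound (le_antisymm (hbound x) hge)
      have := hle x
      omega
    intro y
    rw [fireCnt_append_singleton]
    split_ifs with hxy
    · exact hxy ▸ hlt
    · exact hbound y

lemma exists_isLegalSeq_isCompleteSeq_of_length_le {N : ℕ}
    (hbound : ∀ seq, IsLegalSeq src tgt ρ σ0 seq → seq.length ≤ N) :
    ∃ seq, IsLegalSeq src tgt ρ σ0 seq ∧ IsCompleteSeq src tgt ρ σ0 seq := by
  by_contra! hincomplete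
  have hlong : ∀ n, ∃ seq : List V, IsLegalSeq src tgt ρ σ0 seq ∧ seq.length = n := by
    intro n
    induction n with
    | zero => exact ⟨[], isLegalSeq_nil src tgt ρ σ0, rfl⟩
    | succ n ih =>
      obtain ⟨seq, hlegal, rfl⟩ := ih
      obtain ⟨x, hx⟩ : ∃ x, 1 < σ0 x + stackLap src tgt ρ (fireCnt seq) x := by
        simpa [IsCompleteSeq] using hincomplete seq hlegal
      exact ⟨seq ++ [x], (isLegalSeq_append_singleton_iff src tgt ρ σ0 seq x).mpr ⟨hlegal, hx⟩,
        by simp⟩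
  obtain ⟨seq, hlegal, hlen⟩ := hlong (N + 1)
  have := hbound seq hlegal
  omega

end FiringSequences

theorem least_action_principle_general {V E : Type*} [DecidableEq V]
    (src tgt : E → V) (ρ : V → ℕ → E)
    (σ0 : V → ℤ)
    (ustar : V → ℕ) (hustar : (Function.support ustar).Finite)
    (hle : ∀ x, σ0 x + stackLap src tgt ρ ustar x ≤ 1) :
    (∃ seq : List V, IsLegalSeq src tgt ρ σ0 seq ∧ IsCompleteSeq src tgt ρ σ0 seq) ∧
    ∀ seq : List V, IsLegalSeq src tgt ρ σ0 seq → IsCompleteSeq src tgt ρ σ0 seq →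
      ∀ x, fireCnt seq x ≤ ustar x := by
  have hodometer : ∀ seq, IsLegalSeq src tgt ρ σ0 seq → fireCnt seq ≤ ustar :=
    fun _ hseq => hseq.fireCnt_le hustar hle
  have hlength : ∀ seq, IsLegalSeq src tgt ρ σ0 seq → seq.length ≤ ∑ x ∈ hustar.toFinset, ustar x :=
    fun seq hseq => seq.length_le_sum_of_count_le hustar (hodometer seq hseq)
  exact ⟨exists_isLegalSeq_isCompleteSeq_of_length_le hlength,
    fun seq hseq _ => hodometer seq hseq⟩

/-- Least Action Principle: if `u_*` is finitely supported and
`σ_* = σ_0 + Δ_ρ u_* ≤ 1`, then there exists a finite complete legal firing sequence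
for `σ_0`, and the odometer of any such sequence is at most `u_*`. -/
theorem least_action_principle {V E : Type*} [DecidableEq V]
    (src tgt : E → V) (ρ : V → ℕ → E)
    (hsrc : ∀ x k, src (ρ x k) = x)
    (hloc : ∀ x : V, {e : E | tgt e = x}.Finite)
    (hconn : ∀ x y : V, Relation.ReflTransGen (fun a b => ∃ e, src e = a ∧ tgt e = b) x y)
    (σ0 : V → ℤ) (hσ0 : (Function.support σ0).Finite)
    (ustar : V → ℕ) (hustar : (Function.support ustar).Finite)
    (hle : ∀ x, σ0 x + stackLap src tgt ρ ustar x ≤ 1) :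
    (∃ seq : List V, IsLegalSeq src tgt ρ σ0 seq ∧ IsCompleteSeq src tgt ρ σ0 seq) ∧
    ∀ seq : List V, IsLegalSeq src tgt ρ σ0 seq → IsCompleteSeq src tgt ρ σ0 seq →
      ∀ x, fireCnt seq x ≤ ustar x :=
  least_action_principle_general src tgt ρ σ0 ustar hustar hle
end

section
/- Suppose u_* : V → ℕ has finite support A_*, σ_*(x) ≥ 1 for all x ∈ A_* where σ_* = σ_0 + Δ_ρ u_*, and the rotor configuration Top_ρ(u_*) is acyclic on A_* (every nonempty finite subset A' ⊆ A_* contains a vertex x with t(ρ_{u_*(x)}(x)) ∉ A'). Then u_* ≤ u, where u is the odometer of σ_0. -/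
open scoped BigOperators

open Classical in
lemma Rcount_mono_s5 {V E : Type*} (src : E → V) (ρ : V → ℕ → E) (e : E) {m n : ℕ} (h : m ≤ n) :
    Rcount src ρ e m ≤ Rcount src ρ e n := by
  unfold Rcount
  exact Finset.card_le_card (Finset.filter_subset_filter _ (Finset.Icc_subset_Icc_right h))

open Classical in
lemma Rcount_split {V E : Type*} (src : E → V) (ρ : V → ℕ → E) (e : E) {m n : ℕ} (h : m ≤ n) :
    Rcount src ρ e n
      = Rcount src ρ e m + ((Finset.Ioc m n).filter fun k => ρ (src e) k = e).card := by
  unfold Rcount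
  have hI : Finset.Icc 1 n = Finset.Icc 1 m ∪ Finset.Ioc m n := by
    ext k
    simp only [Finset.mem_union, Finset.mem_Icc, Finset.mem_Ioc]
    omega
  have hdisj : Disjoint (Finset.Icc 1 m) (Finset.Ioc m n) := by
    rw [Finset.disjoint_left]
    intro k hk hk'
    simp only [Finset.mem_Icc] at hk
    simp only [Finset.mem_Ioc] at hk'
    omega
  rw [hI, Finset.filter_union,
    Finset.card_union_of_disjoint (Finset.disjoint_filter_filter hdisj)]

open Classical in
lemma stackLap_eq {V E : Type*} (src tgt : E → V) (ρ : V → ℕ → E)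
    (hloc : ∀ x : V, {e : E | tgt e = x}.Finite) (w : V → ℕ) (x : V) :
    stackLap src tgt ρ w x =
      (∑ e ∈ (hloc x).toFinset, (Rcount src ρ e (w (src e)) : ℤ)) - w x := by
  unfold stackLap
  congr 1
  rw [finsum_eq_finset_sum_of_support_subset]
  · apply Finset.sum_congr rfl
    intro e he
    rw [Set.Finite.mem_toFinset, Set.mem_setOf_eq] at he
    simp [he]
  · intro e he
    simp only [Function.mem_support, ne_eq] at he
    by_cases hh : tgt e = x
    · simpa [Set.Finite.coe_toFinset] using hh
    · simp [hh] at he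

/-- If `u_*` is finitely supported, `σ_* = σ_0 + Δ_ρ u_*` is at least `1` on the
support of `u_*`, and the top rotors `Top_ρ(u_*)` are acyclic on the support,
then `u_* ≤ u` for the odometer `u` of any finite complete legal firing sequence. -/
theorem odometer_lower_bound {V E : Type*} [DecidableEq V]
    (src tgt : E → V) (ρ : V → ℕ → E)
    (hsrc : ∀ x k, src (ρ x k) = x)
    (hloc : ∀ x : V, {e : E | tgt e = x}.Finite)
    (hconn : ∀ x y : V, Relation.ReflTransGen (fun a b => ∃ e, src e = a ∧ tgt e = b) x y)
    (σ0 : V → ℤ) (hσ0 : (Function.support σ0).Finite)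
    (ustar : V → ℕ) (hustar : (Function.support ustar).Finite)
    (hge : ∀ x, ustar x ≠ 0 → 1 ≤ σ0 x + stackLap src tgt ρ ustar x)
    (hacyc : AcyclicOn tgt (fun x => ρ x (ustar x)) (Function.support ustar)) :
    ∀ seq : List V, IsLegalSeq src tgt ρ σ0 seq → IsCompleteSeq src tgt ρ σ0 seq →
      ∀ x, ustar x ≤ fireCnt seq x := by
  classical
  intro seq _hlegal hcomplete x0
  by_contra hx0
  push_neg at hx0
  set u : V → ℕ := fireCnt seq with hu
  -- the deficit set
  set A : Finset V := hustar.toFinset.filter (fun y => u y < ustar y) with hA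
  have hmemA : ∀ y, y ∈ A ↔ u y < ustar y := by
    intro y
    constructor
    · intro h; exact (Finset.mem_filter.mp h).2
    · intro h
      rw [hA, Finset.mem_filter, Set.Finite.mem_toFinset]
      exact ⟨Function.mem_support.mpr (by omega), h⟩
  have hx0A : x0 ∈ A := (hmemA x0).mpr hx0
  have hnotA : ∀ y, y ∉ A → ustar y ≤ u y := by
    intro y h
    by_contra hc
    exact h ((hmemA y).mpr (by omega))
  -- the edge-difference function
  set Rd : E → ℤ := fun e =>
    (Rcount src ρ e (ustar (src e)) : ℤ) - Rcount src ρ e (u (src e)) with hRd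
  -- per-vertex inflow inequality
  have key1 : ∀ y ∈ A,
      (ustar y : ℤ) - u y ≤
        ∑ e ∈ ((hloc y).toFinset.filter fun e => src e ∈ A), Rd e := by
    intro y hy
    have hyA := (hmemA y).mp hy
    have h1 := hge y (by omega)
    have h2 := hcomplete y
    rw [stackLap_eq src tgt ρ hloc] at h1 h2
    have hdiff : (ustar y : ℤ) - u y ≤ ∑ e ∈ (hloc y).toFinset, Rd e := by
      rw [hRd, Finset.sum_sub_distrib]
      linarith
    refine le_trans hdiff ?_
    rw [← Finset.sum_filter_add_sum_filter_not ((hloc y).toFinset) (fun e => src e ∈ A)]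
    have hnonpos : ∑ e ∈ ((hloc y).toFinset.filter fun e => ¬ src e ∈ A), Rd e ≤ 0 := by
      apply Finset.sum_nonpos
      intro e he
      have h3 := hnotA (src e) (Finset.mem_filter.mp he).2
      have h4 := Rcount_mono_s5 src ρ e h3
      rw [hRd]
      dsimp only
      omega
    linarith
  -- the relevant edge set
  set F : Finset E := A.biUnion (fun y => (hloc y).toFinset.filter fun e => src e ∈ A)
    with hF
  have hFmem : ∀ e ∈ F, tgt e ∈ A ∧ src e ∈ A := by
    intro e he
    rw [hF, Finset.mem_biUnion] at he
    obtain ⟨y, hyA, he⟩ := he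
    rw [Finset.mem_filter, Set.Finite.mem_toFinset, Set.mem_setOf_eq] at he
    exact ⟨he.1 ▸ hyA, he.2⟩
  have hdisj : (↑A : Set V).PairwiseDisjoint
      (fun y => (hloc y).toFinset.filter fun e => src e ∈ A) := by
    intro a _ b _ hab
    rw [Function.onFun, Finset.disjoint_left]
    intro e hea heb
    rw [Finset.mem_filter, Set.Finite.mem_toFinset, Set.mem_setOf_eq] at hea heb
    exact hab (hea.1 ▸ heb.1)
  have hsum1 : ∑ y ∈ A, ((ustar y : ℤ) - u y) ≤ ∑ e ∈ F, Rd e := by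
    calc ∑ y ∈ A, ((ustar y : ℤ) - u y)
        ≤ ∑ y ∈ A, ∑ e ∈ ((hloc y).toFinset.filter fun e => src e ∈ A), Rd e :=
          Finset.sum_le_sum key1
      _ = ∑ e ∈ F, Rd e := (Finset.sum_biUnion hdisj).symm
  have hsum2 : ∑ e ∈ F, Rd e = ∑ y ∈ A, ∑ e ∈ F.filter (fun e => src e = y), Rd e :=
    (Finset.sum_fiberwise_of_maps_to (fun e he => (hFmem e he).2) _).symm
  -- per-source identity: sum of Rd over edges out of y equals a count of rotor steps
  have key2 : ∀ y ∈ A, ∑ e ∈ F.filter (fun e => src e = y), Rd e =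
      (((Finset.Ioc (u y) (ustar y)).filter
        (fun k => ρ y k ∈ F.filter (fun e => src e = y))).card : ℤ) := by
    intro y hy
    have hyA := (hmemA y).mp hy
    have hterm : ∀ e ∈ F.filter (fun e => src e = y), Rd e =
        (((Finset.Ioc (u y) (ustar y)).filter (fun k => ρ y k = e)).card : ℤ) := by
      intro e he
      have hse : src e = y := (Finset.mem_filter.mp he).2
      have hsp := Rcount_split src ρ e (m := u y) (n := ustar y) (le_of_lt hyA)
      rw [hRd]
      dsimp only
      rw [hse, hsp, hse]
      push_cast
      ring
    rw [Finset.sum_congr rfl hterm]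
    rw [← Nat.cast_sum]
    congr 1
    symm
    refine (Finset.card_eq_sum_card_fiberwise (f := fun k => ρ y k)
      (t := F.filter (fun e => src e = y)) ?_).trans ?_
    · intro k hk
      exact (Finset.mem_filter.mp hk).2
    · apply Finset.sum_congr rfl
      intro e he
      congr 1
      rw [Finset.filter_filter]
      apply Finset.filter_congr
      intro k _
      constructor
      · intro h; exact h.2
      · intro h; exact ⟨h ▸ he, h⟩
  -- general per-source bound
  have bound1 : ∀ y ∈ A,
      (((Finset.Ioc (u y) (ustar y)).filter
        (fun k => ρ y k ∈ F.filter (fun e => src e = y))).card : ℤ)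
        ≤ (ustar y : ℤ) - u y := by
    intro y hy
    have hyA := (hmemA y).mp hy
    have h1 : ((Finset.Ioc (u y) (ustar y)).filter
        (fun k => ρ y k ∈ F.filter (fun e => src e = y))).card
        ≤ (Finset.Ioc (u y) (ustar y)).card :=
      Finset.card_le_card (Finset.filter_subset _ _)
    rw [Nat.card_Ioc] at h1
    omega
  -- acyclicity gives a source with a strict bound
  have hAsub : (↑A : Set V) ⊆ Function.support ustar := by
    intro y hy
    have := (hmemA y).mp hy
    exact Function.mem_support.mpr (by omega)
  obtain ⟨y0, hy0A, hy0⟩ := hacyc ↑A hAsub (A.finite_toSet) ⟨x0, hx0A⟩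
  have hy0A' : y0 ∈ A := hy0A
  have bound2 :
      (((Finset.Ioc (u y0) (ustar y0)).filter
        (fun k => ρ y0 k ∈ F.filter (fun e => src e = y0))).card : ℤ)
        < (ustar y0 : ℤ) - u y0 := by
    have hy0lt := (hmemA y0).mp hy0A'
    have hsub : ((Finset.Ioc (u y0) (ustar y0)).filter
        (fun k => ρ y0 k ∈ F.filter (fun e => src e = y0)))
        ⊆ (Finset.Ioc (u y0) (ustar y0)).erase (ustar y0) := by
      intro k hk
      rw [Finset.mem_filter] at hk
      rw [Finset.mem_erase]
      refine ⟨?_, hk.1⟩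
      intro hke
      have hmemF : ρ y0 k ∈ F := (Finset.mem_filter.mp hk.2).1
      have := (hFmem _ hmemF).1
      rw [hke] at this
      exact hy0 this
    have h1 := Finset.card_le_card hsub
    rw [Finset.card_erase_of_mem (by rw [Finset.mem_Ioc]; omega), Nat.card_Ioc] at h1
    omega
  have hlt : ∑ y ∈ A, ∑ e ∈ F.filter (fun e => src e = y), Rd e
      < ∑ y ∈ A, ((ustar y : ℤ) - u y) := by
    apply Finset.sum_lt_sum
    · intro y hy
      rw [key2 y hy]
      exact bound1 y hy
    · refine ⟨y0, hy0A', ?_⟩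
      rw [key2 y0 hy0A']
      exact bound2
  rw [← hsum2] at hlt
  linarith
end

section
/- (Cycle removal) Let (x_i, k_i), i = 1,…,m, be distinct pairs such that the edges ρ_{k_i}(x_i) form a directed cycle in G, with k_i ≤ u(ρ,σ)(x_i) − 1 for all i. Let ρ' be obtained from ρ by deleting the rotors ρ_{k_i}(x_i) from the stacks and re-indexing. Then u(ρ,σ) = u(ρ',σ) + χ, where χ(x) = #{i : x_i = x}; moreover the final chip configurations and final top rotor configurations agree: σ + Δ_ρ u(ρ,σ) = σ + Δ_{ρ'} u(ρ',σ) and Top_ρ(u(ρ,σ)) = Top_{ρ'}(u(ρ',σ)). -/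
/-!
Deleting the rotors `ρ_{k i}(x i)` re-indexes the stack at `v` by a strictly monotone `g_v`.
Exactly `χ(v)` deleted indices lie in `(0, u v]` and `u v` itself is kept, so
`g_v (u v - χ v) = u v`: the top rotors agree. For each edge `e`, the rotors `ρ_1, …, ρ_{u(s e)}`
equal to `e` split into those that survive, counted by `R_{ρ'}(e, u(s e) - χ(s e))`, and the
deleted ones. Since the deleted rotors form a cycle, exactly `χ(v)` of them point into `v`, which
is what `u - χ` subtracts at `v`; hence the two Laplacians agree, and the defining properties of
the odometer transfer from `u` to `u - χ`.
-/

open scoped BigOperators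

/-- `u` is the odometer of the chip configuration `σ` with rotor stacks `ρ`:
`u` has finite support, `σ + Δ_ρ u ≤ 1` everywhere, `σ + Δ_ρ u = 1` on the support
of `u`, and the top rotors `Top_ρ(u)` are acyclic on the support of `u`. -/
def IsOdometer {V E : Type*} (src tgt : E → V) (ρ : V → ℕ → E)
    (σ : V → ℤ) (u : V → ℕ) : Prop :=
  (Function.support u).Finite ∧
  (∀ x, σ x + stackLap src tgt ρ u x ≤ 1) ∧
  (∀ x, u x ≠ 0 → σ x + stackLap src tgt ρ u x = 1) ∧
  AcyclicOn tgt (fun x => ρ x (u x)) (Function.support u)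

open Classical in
/-- `chi x v` is the number of indices `i` with `x i = v`. -/
noncomputable def chi {V : Type*} {m : ℕ} (x : Fin m → V) (v : V) : ℕ :=
  (Finset.univ.filter fun i => x i = v).card

section

open Finset Function
open scoped Classical

theorem StrictMono.image_Ioc {α β : Type*} [LinearOrder α] [LocallyFiniteOrder α]
    [LinearOrder β] [LocallyFiniteOrder β] {g : α → β} (hg : StrictMono g) (a b : α) :
    (Ioc a b).image g = (Ioc (g a) (g b)).filter (· ∈ Set.range g) := by
  ext j
  simp only [mem_image, mem_filter, mem_Ioc]
  constructor
  · rintro ⟨i, ⟨hai, hib⟩, rfl⟩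
    exact ⟨⟨hg hai, hg.monotone hib⟩, i, rfl⟩
  · rintro ⟨⟨hj₁, hj₂⟩, i, rfl⟩
    exact ⟨i, ⟨hg.lt_iff_lt.mp hj₁, hg.le_iff_le.mp hj₂⟩, rfl⟩

theorem StrictMono.card_filter_mem_range_Ioc {g : ℕ → ℕ} (hg : StrictMono g) (a b : ℕ) :
    #((Ioc (g a) (g b)).filter (· ∈ Set.range g)) = b - a := by
  rw [← hg.image_Ioc, card_image_of_injective _ hg.injective, Nat.card_Ioc]

theorem StrictMono.apply_sub_card_filter_notMem_range {g : ℕ → ℕ} (hg : StrictMono g)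
    (hg0 : g 0 = 0) {b : ℕ} (hb : b ∈ Set.range g) :
    g (b - #((Ioc 0 b).filter (· ∉ Set.range g))) = b := by
  obtain ⟨a, rfl⟩ := hb
  have hkept : #((Ioc 0 (g a)).filter (· ∈ Set.range g)) = a := by
    simpa [hg0] using hg.card_filter_mem_range_Ioc 0 a
  have hsplit := card_filter_add_card_filter_not (s := Ioc 0 (g a)) (· ∈ Set.range g)
  rw [Nat.card_Ioc] at hsplit
  congr
  omega

theorem StrictMono.card_filter_comp_add_card_filter_notMem_range {α β : Type*} [LinearOrder α]
    [LocallyFiniteOrder α] [LinearOrder β] [LocallyFiniteOrder β] {g : α → β}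
    (hg : StrictMono g) (p : β → Prop) (a b : α) :
    #((Ioc a b).filter fun j => p (g j)) +
        #((Ioc (g a) (g b)).filter fun j => p j ∧ j ∉ Set.range g) =
      #((Ioc (g a) (g b)).filter p) := by
  have hkept : #((Ioc a b).filter fun j => p (g j)) =
      #((Ioc (g a) (g b)).filter fun j => p j ∧ j ∈ Set.range g) := by
    calc #((Ioc a b).filter fun j => p (g j))
        = #(((Ioc a b).image g).filter p) := by
          rw [filter_image, card_image_of_injective _ hg.injective]
      _ = #((Ioc (g a) (g b)).filter fun j => p j ∧ j ∈ Set.range g) := by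
          rw [hg.image_Ioc, filter_filter]
          simp only [and_comm]
  rw [hkept, ← filter_filter, ← filter_filter, card_filter_add_card_filter_not]

theorem Rcount_eq_card_Ioc {V E : Type*} (src : E → V) (ρ : V → ℕ → E) (e : E) (n : ℕ) :
    Rcount src ρ e n = #((Ioc 0 n).filter (ρ (src e) · = e)) := by
  rw [Rcount, ← Icc_add_one_left_eq_Ioc, zero_add]

theorem card_filter_exists_eq_of_injective {ι V : Type*} [Fintype ι] {x : ι → V}
    {k : ι → ℕ} (hinj : Injective fun i => (x i, k i)) {w : V} {T : Finset ℕ}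
    (hT : ∀ i, x i = w → k i ∈ T) (p : ℕ → Prop) :
    #(T.filter fun j => p j ∧ ∃ i, x i = w ∧ k i = j) =
      #(univ.filter fun i => x i = w ∧ p (k i)) := by
  symm
  refine card_nbij k ?_ ?_ ?_
  · intro i hi
    simp only [coe_filter, mem_univ, true_and, Set.mem_ofPred_eq] at hi ⊢
    exact ⟨hT i hi.1, hi.2, i, hi.1, rfl⟩
  · intro i hi j hj hij
    simp only [coe_filter, mem_univ, true_and, Set.mem_ofPred_eq] at hi hj
    exact hinj (Prod.ext (hi.1.trans hj.1.symm) hij)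
  · rintro n hn
    simp only [coe_filter, Set.mem_ofPred_eq] at hn
    obtain ⟨-, hpn, i, hxi, rfl⟩ := hn
    exact ⟨i, by simpa using ⟨hxi, hpn⟩, rfl⟩

theorem finsum_ite_tgt_card_filter_eq {ι V E : Type*} [Fintype ι] (tgt : E → V) {v : V}
    (hv : {e | tgt e = v}.Finite) (f : ι → E) :
    ∑ᶠ e, (if tgt e = v then (#(univ.filter fun i => f i = e) : ℤ) else 0) =
      #(univ.filter fun i => tgt (f i) = v) := by
  have hsupp : (support fun e => if tgt e = v then (#(univ.filter fun i => f i = e) : ℤ) else 0)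
      ⊆ hv.toFinset := fun e he => by
    by_contra h
    simp_all
  rw [finsum_eq_sum_of_support_subset _ hsupp, ← sum_filter,
    card_eq_sum_card_fiberwise (t := hv.toFinset.filter (tgt · = v)) (f := f)]
  · push_cast
    refine sum_congr rfl fun e he => ?_
    rw [filter_filter]
    congr 2
    ext i
    simp only [mem_filter, mem_univ, true_and, Set.Finite.mem_toFinset] at he ⊢
    constructor
    · rintro rfl; exact ⟨he.2, rfl⟩
    · rintro ⟨-, rfl⟩; rfl
  · intro i hi
    simpa using hi

theorem card_filter_apply_add_one_eq_chi {V : Type*} {m : ℕ} [NeZero m] (x : Fin m → V)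
    (v : V) :
    #(univ.filter fun i => x (i + 1) = v) = chi x v :=
  card_equiv (Equiv.addRight 1) (by simp)

theorem stackLap_eq_of_Rcount_eq_add {V E : Type*} {src tgt : E → V} {ρ ρ' : V → ℕ → E}
    {u u' : V → ℕ} {v : V} (hv : {e | tgt e = v}.Finite) (c : E → ℕ)
    (hR : ∀ e, tgt e = v → Rcount src ρ e (u (src e)) = Rcount src ρ' e (u' (src e)) + c e)
    (hc : ∑ᶠ e, (if tgt e = v then (c e : ℤ) else 0) + u' v = u v) :
    stackLap src tgt ρ' u' v = stackLap src tgt ρ u v := by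
  have hfin (f : E → ℤ) : (support fun e => if tgt e = v then f e else 0).Finite :=
    hv.subset fun e he => by
      by_contra h
      simp_all
  have hsum : (∑ᶠ e, if tgt e = v then (Rcount src ρ e (u (src e)) : ℤ) else 0) =
      (∑ᶠ e, if tgt e = v then (Rcount src ρ' e (u' (src e)) : ℤ) else 0) +
        ∑ᶠ e, if tgt e = v then (c e : ℤ) else 0 := by
    rw [← finsum_add_distrib (hfin _) (hfin _)]
    refine finsum_congr fun e => ?_
    split_ifs with h
    · rw [hR e h]; push_cast; rfl
    · rfl
  rw [stackLap, stackLap, hsum]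
  linarith

theorem IsOdometer.of_stackLap_eq {V E : Type*} {src tgt : E → V} {ρ ρ' : V → ℕ → E}
    {σ : V → ℤ} {u u' : V → ℕ} (hu : IsOdometer src tgt ρ σ u)
    (hsupp : support u' ⊆ support u)
    (hlap : ∀ v, stackLap src tgt ρ' u' v = stackLap src tgt ρ u v)
    (htop : ∀ v, ρ' v (u' v) = ρ v (u v)) :
    IsOdometer src tgt ρ' σ u' := by
  obtain ⟨hfin, hle, heq, hacyc⟩ := hu
  refine ⟨hfin.subset hsupp, fun v => hlap v ▸ hle v, fun v hv => hlap v ▸ heq v (hsupp hv),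
    fun A hA hAfin hAne => ?_⟩
  simpa only [htop] using hacyc A (hA.trans hsupp) hAfin hAne

section DeletedRotors

variable {V E : Type*} {m : ℕ} {x : Fin m → V} {k : Fin m → ℕ} {u : V → ℕ} {g : ℕ → ℕ}

theorem card_Ioc_filter_exists_eq_chi (hinj : Injective fun i => (x i, k i))
    (hk : ∀ i, k i ∈ Ioc 0 (u (x i))) (w : V) :
    #((Ioc 0 (u w)).filter fun j => ∃ i, x i = w ∧ k i = j) = chi x w := by
  simpa [chi] using
    card_filter_exists_eq_of_injective hinj (fun i hi => hi ▸ hk i) (fun _ => True)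

theorem chi_le (hinj : Injective fun i => (x i, k i)) (hk : ∀ i, k i ∈ Ioc 0 (u (x i)))
    (w : V) : chi x w ≤ u w := by
  rw [← card_Ioc_filter_exists_eq_chi hinj hk w]
  exact (card_filter_le _ _).trans_eq (Nat.card_Ioc 0 (u w))

variable {w : V}

theorem notMem_range_iff_of_range_eq (hrange : Set.range g = {n | ¬ ∃ i, x i = w ∧ k i = n})
    (n : ℕ) : n ∉ Set.range g ↔ ∃ i, x i = w ∧ k i = n := by
  simp [hrange]

theorem apply_sub_chi_eq (hinj : Injective fun i => (x i, k i))
    (hk : ∀ i, k i ∈ Ioo 0 (u (x i))) (hg : StrictMono g) (hg0 : g 0 = 0)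
    (hrange : Set.range g = {n | ¬ ∃ i, x i = w ∧ k i = n}) :
    g (u w - chi x w) = u w := by
  have hu : u w ∈ Set.range g := by
    rw [hrange]
    rintro ⟨i, rfl, hki⟩
    exact (mem_Ioo.mp (hk i)).2.ne' hki.symm
  rw [← card_Ioc_filter_exists_eq_chi hinj (fun i => Ioo_subset_Ioc_self (hk i)),
    ← filter_congr fun n _ => notMem_range_iff_of_range_eq hrange n]
  exact hg.apply_sub_card_filter_notMem_range hg0 hu

theorem Rcount_eq_Rcount_add_card {src : E → V} {ρ ρ' : V → ℕ → E}
    (hsrc : ∀ v n, src (ρ v n) = v) (hinj : Injective fun i => (x i, k i))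
    (hk : ∀ i, k i ∈ Ioo 0 (u (x i))) {e : E}
    (hg : StrictMono g) (hg0 : g 0 = 0)
    (hrange : Set.range g = {n | ¬ ∃ i, x i = src e ∧ k i = n})
    (hρ' : ∀ n, ρ' (src e) n = ρ (src e) (g n)) :
    Rcount src ρ e (u (src e)) = Rcount src ρ' e (u (src e) - chi x (src e)) +
      #(univ.filter fun i => ρ (x i) (k i) = e) := by
  have hsplit := hg.card_filter_comp_add_card_filter_notMem_range (ρ (src e) · = e) 0
    (u (src e) - chi x (src e))
  rw [hg0, apply_sub_chi_eq hinj hk hg hg0 hrange] at hsplit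
  rw [Rcount_eq_card_Ioc, Rcount_eq_card_Ioc, ← hsplit]
  simp only [hρ', notMem_range_iff_of_range_eq hrange]
  congr 1
  convert card_filter_exists_eq_of_injective hinj (w := src e)
    (fun i hi => hi ▸ Ioo_subset_Ioc_self (hk i)) (ρ (src e) · = e) using 2
  · congr!
  ext i
  simp only [mem_filter, mem_univ, true_and]
  constructor
  · intro h
    have hi : x i = src e := by rw [← h, hsrc]
    exact ⟨hi, hi ▸ h⟩
  · rintro ⟨hi, h⟩; rwa [hi]

end DeletedRotors

end

open Classical in
theorem cycle_removal_general {V E : Type*}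
    (src tgt : E → V) (ρ ρ' : V → ℕ → E)
    (hsrc : ∀ x k, src (ρ x k) = x)
    (hloc : ∀ x : V, {e : E | tgt e = x}.Finite)
    (σ : V → ℤ) (m : ℕ) [NeZero m] (x : Fin m → V) (k : Fin m → ℕ)
    (hdist : Function.Injective fun i => (x i, k i))
    (hcyc : ∀ i : Fin m, src (ρ (x (i + 1)) (k (i + 1))) = tgt (ρ (x i) (k i)))
    (u : V → ℕ) (hu : IsOdometer src tgt ρ σ u)
    (hk : ∀ i, 1 ≤ k i ∧ k i ≤ u (x i) - 1)
    (hρ' : ∀ v : V, ∃ g : ℕ → ℕ, StrictMono g ∧ g 0 = 0 ∧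
      Set.range g = {n : ℕ | ¬ ∃ i, x i = v ∧ k i = n} ∧ ∀ n, ρ' v n = ρ v (g n)) :
    IsOdometer src tgt ρ' σ (fun v => u v - chi x v) ∧
    (∀ v, σ v + stackLap src tgt ρ u v =
      σ v + stackLap src tgt ρ' (fun w => u w - chi x w) v) ∧
    ∀ v, ρ v (u v) = ρ' v (u v - chi x v) := by
  choose g hg hg0 hrange hρg using hρ'
  have hk' (i : Fin m) : k i ∈ Finset.Ioo 0 (u (x i)) := by
    have := hk i
    exact Finset.mem_Ioo.mpr ⟨this.1, by omega⟩
  have htop (v : V) : ρ' v (u v - chi x v) = ρ v (u v) := by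
    rw [hρg, apply_sub_chi_eq hdist hk' (hg v) (hg0 v) (hrange v)]
  have hlap (v : V) :
      stackLap src tgt ρ' (fun w => u w - chi x w) v = stackLap src tgt ρ u v := by
    refine stackLap_eq_of_Rcount_eq_add (hloc v) _ (fun e _ => Rcount_eq_Rcount_add_card hsrc
      hdist hk' (hg _) (hg0 _) (hrange _) (hρg _)) ?_
    rw [finsum_ite_tgt_card_filter_eq tgt (hloc v)]
    simp only [← hcyc, hsrc]
    rw [card_filter_apply_add_one_eq_chi x v]
    have := chi_le hdist (fun i => Finset.Ioo_subset_Ioc_self (hk' i)) v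
    omega
  exact ⟨hu.of_stackLap_eq (fun v hv hu0 => hv (by simp [hu0])) hlap htop,
    fun v => by rw [hlap], fun v => (htop v).symm⟩

open Classical in
/-- Cycle removal: if the rotors `ρ_{k i}(x i)` (for distinct pairs `(x i, k i)` with
`1 ≤ k i ≤ u(x i) − 1`) form a directed cycle, and `ρ'` is obtained from `ρ` by deleting
these rotors and re-indexing, then the odometer for `ρ'` is `u − χ`, and the final chip
and top rotor configurations agree. -/
theorem cycle_removal {V E : Type*}
    (src tgt : E → V) (ρ ρ' : V → ℕ → E)
    (hsrc : ∀ x k, src (ρ x k) = x) (hsrc' : ∀ x k, src (ρ' x k) = x)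
    (hloc : ∀ x : V, {e : E | tgt e = x}.Finite)
    (σ : V → ℤ) (m : ℕ) [NeZero m] (x : Fin m → V) (k : Fin m → ℕ)
    (hdist : Function.Injective fun i => (x i, k i))
    (hcyc : ∀ i : Fin m, src (ρ (x (i + 1)) (k (i + 1))) = tgt (ρ (x i) (k i)))
    (u : V → ℕ) (hu : IsOdometer src tgt ρ σ u)
    (hk : ∀ i, 1 ≤ k i ∧ k i ≤ u (x i) - 1)
    (hρ' : ∀ v : V, ∃ g : ℕ → ℕ, StrictMono g ∧ g 0 = 0 ∧
      Set.range g = {n : ℕ | ¬ ∃ i, x i = v ∧ k i = n} ∧ ∀ n, ρ' v n = ρ v (g n)) :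
    IsOdometer src tgt ρ' σ (fun v => u v - chi x v) ∧
    (∀ v, σ v + stackLap src tgt ρ u v =
      σ v + stackLap src tgt ρ' (fun w => u w - chi x w) v) ∧
    ∀ v, ρ v (u v) = ρ' v (u v - chi x v) :=
  cycle_removal_general src tgt ρ ρ' hsrc hloc σ m x k hdist hcyc u hu hk hρ'
end

section
/- If vertices of a directed cycle are each unfired once (i.e., u is decreased by χ, the indicator counting function of the cycle's vertices), then the chip configuration is unchanged: for rotor stacks ρ and a function u : V → ℕ such that the top rotors {ρ_{u(x_i)}(x_i)} at the cycle vertices form a directed cycle, Δ_ρ u = Δ_ρ (u − χ). -/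
open scoped BigOperators

open Classical in
/-- Unfiring a directed cycle once leaves the chip configuration unchanged:
if the top rotors `ρ_{u(x i)}(x i)` at distinct vertices `x 1, …, x m` form a directed
cycle, then `Δ_ρ u = Δ_ρ (u − χ)` where `χ` is the indicator of the cycle vertices. -/
theorem cycle_unfire {V E : Type*}
    (src tgt : E → V) (ρ : V → ℕ → E)
    (hsrc : ∀ x k, src (ρ x k) = x)
    (hloc : ∀ v : V, {e : E | tgt e = v}.Finite)
    (m : ℕ) [NeZero m] (x : Fin m → V) (hinj : Function.Injective x)
    (u : V → ℕ) (hu1 : ∀ i, 1 ≤ u (x i))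
    (hcyc : ∀ i : Fin m,
      src (ρ (x (i + 1)) (u (x (i + 1)))) = tgt (ρ (x i) (u (x i)))) :
    ∀ v, stackLap src tgt ρ u v = stackLap src tgt ρ (fun w => u w - chi x w) v := by
  classical
  set u' : V → ℕ := fun w => u w - chi x w with hu'def
  have hchi_eq : ∀ i, chi x (x i) = 1 := by
    intro i
    unfold chi
    have : (Finset.univ.filter fun j => x j = x i) = {i} := by
      ext j
      simp only [Finset.mem_filter, Finset.mem_univ, true_and, Finset.mem_singleton]
      exact ⟨fun h => hinj h, fun h => by rw [h]⟩
    rw [this, Finset.card_singleton]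
  have hchi0 : ∀ w, (¬ ∃ i, x i = w) → chi x w = 0 := by
    intro w hw
    unfold chi
    rw [Finset.card_eq_zero]
    apply Finset.filter_eq_empty_iff.mpr
    intro i _ h
    exact hw ⟨i, h⟩
  have hchile : ∀ w, chi x w ≤ u w := by
    intro w
    by_cases hw : ∃ i, x i = w
    · obtain ⟨i, rfl⟩ := hw
      rw [hchi_eq i]; exact hu1 i
    · rw [hchi0 w hw]; exact Nat.zero_le _
  -- key pointwise computation
  have key : ∀ e : E, (Rcount src ρ e (u (src e)) : ℤ) - Rcount src ρ e (u' (src e))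
      = if ∃ i, e = ρ (x i) (u (x i)) then 1 else 0 := by
    intro e
    by_cases h : ∃ i, src e = x i
    · obtain ⟨i, hi⟩ := h
      have hn : u (src e) = u (x i) := by rw [hi]
      have hn1 : 1 ≤ u (src e) := hn ▸ hu1 i
      have hu'e : u' (src e) = u (src e) - 1 := by
        simp only [hu'def]
        rw [hi, hchi_eq i]
      have hIcc : Finset.Icc 1 (u (src e)) =
          insert (u (src e)) (Finset.Icc 1 (u (src e) - 1)) := by
        ext k
        simp only [Finset.mem_Icc, Finset.mem_insert]
        omega
      have hnotmem : u (src e) ∉ Finset.Icc 1 (u (src e) - 1) := by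
        simp only [Finset.mem_Icc]; omega
      have hdiff : Rcount src ρ e (u (src e)) = Rcount src ρ e (u (src e) - 1)
          + (if ρ (src e) (u (src e)) = e then 1 else 0) := by
        unfold Rcount
        rw [hIcc, Finset.filter_insert]
        split
        · rw [Finset.card_insert_of_notMem (fun hmem => hnotmem (Finset.mem_filter.mp hmem).1)]
        · simp
      have hiff : (∃ j, e = ρ (x j) (u (x j))) ↔ ρ (src e) (u (src e)) = e := by
        constructor
        · rintro ⟨j, hj⟩
          have hxji : x j = x i := by rw [← hsrc (x j) (u (x j)), ← hj, hi]
          have hji : j = i := hinj hxji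
          rw [hi]
          exact (hji ▸ hj).symm
        · intro hh
          exact ⟨i, by rw [← hh, hi]⟩
      rw [hu'e, hdiff]
      by_cases hc : ρ (src e) (u (src e)) = e
      · rw [if_pos hc, if_pos (hiff.mpr hc)]; push_cast; ring
      · rw [if_neg hc, if_neg (fun hj => hc (hiff.mp hj))]; push_cast; ring
    · have hchiz : chi x (src e) = 0 := hchi0 _ (fun ⟨i, hi⟩ => h ⟨i, hi.symm⟩)
      have hu'e : u' (src e) = u (src e) := by
        simp only [hu'def]; rw [hchiz]; rfl
      rw [hu'e, if_neg]
      · ring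
      · rintro ⟨i, rfl⟩
        exact h ⟨i, hsrc _ _⟩
  -- convert finsums to finite sums
  intro v
  set S : Finset E := (hloc v).toFinset with hS
  have hmemS : ∀ e, e ∈ S ↔ tgt e = v := by
    intro e; rw [hS, Set.Finite.mem_toFinset]; rfl
  have hsum : ∀ (w : V → ℕ),
      (∑ᶠ e : E, if tgt e = v then (Rcount src ρ e (w (src e)) : ℤ) else 0)
        = ∑ e ∈ S, (Rcount src ρ e (w (src e)) : ℤ) := by
    intro w
    rw [finsum_eq_finset_sum_of_support_subset _ (s := S) ?_]
    · apply Finset.sum_congr rfl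
      intro e he
      rw [if_pos ((hmemS e).mp he)]
    · intro e he
      simp only [Function.mem_support, ne_eq, ite_eq_right_iff, not_forall] at he
      exact (hmemS e).mpr he.1
  -- count the cycle edges landing at v
  have ht : ∀ i : Fin m, tgt (ρ (x i) (u (x i))) = x (i + 1) := by
    intro i
    rw [← hcyc i, hsrc]
  have hcount : ((S.filter (fun e => ∃ i, e = ρ (x i) (u (x i)))).card : ℤ) = chi x v := by
    have h1 : (Finset.univ.filter fun i : Fin m => x (i + 1) = v).card
        = (S.filter (fun e => ∃ i, e = ρ (x i) (u (x i)))).card := by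
      apply Finset.card_bij (fun i _ => ρ (x i) (u (x i)))
      · intro i hi
        simp only [Finset.mem_filter, Finset.mem_univ, true_and] at hi ⊢
        refine ⟨(hmemS _).mpr (by rw [ht i, hi]), i, rfl⟩
      · intro i _ j _ hij
        have : x i = x j := by rw [← hsrc (x i) (u (x i)), ← hsrc (x j) (u (x j)), hij]
        exact hinj this
      · intro e he
        simp only [Finset.mem_filter] at he
        obtain ⟨heS, i, rfl⟩ := he
        refine ⟨i, ?_, rfl⟩
        simp only [Finset.mem_filter, Finset.mem_univ, true_and]
        rw [← ht i]
        exact (hmemS _).mp heS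
    have h2 : (Finset.univ.filter fun i : Fin m => x (i + 1) = v).card = chi x v := by
      unfold chi
      apply Finset.card_bij (fun i _ => i + 1)
      · intro i hi
        simp only [Finset.mem_filter, Finset.mem_univ, true_and] at hi ⊢
        exact hi
      · intro i _ j _ hij
        exact add_right_cancel hij
      · intro j hj
        simp only [Finset.mem_filter, Finset.mem_univ, true_and] at hj
        exact ⟨j - 1, by simp [Finset.mem_filter, sub_add_cancel, hj], sub_add_cancel j 1⟩
    rw [← h1, h2]
  -- assemble
  unfold stackLap
  rw [hsum u, hsum u']
  have hsplit : ∑ e ∈ S, (Rcount src ρ e (u (src e)) : ℤ)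
      - ∑ e ∈ S, (Rcount src ρ e (u' (src e)) : ℤ)
      = ∑ e ∈ S, ((Rcount src ρ e (u (src e)) : ℤ) - Rcount src ρ e (u' (src e))) := by
    rw [Finset.sum_sub_distrib]
  have hsum2 : ∑ e ∈ S, ((Rcount src ρ e (u (src e)) : ℤ) - Rcount src ρ e (u' (src e)))
      = ((S.filter (fun e => ∃ i, e = ρ (x i) (u (x i)))).card : ℤ) := by
    rw [Finset.sum_congr rfl (fun e _ => key e)]
    simp [Finset.sum_boole]
  have huv : (u v : ℤ) - (u' v : ℤ) = chi x v := by
    simp only [hu'def]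
    push_cast [Nat.cast_sub (hchile v)]
    ring
  linarith [hsplit, hsum2, hcount, huv]
end
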